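/- arXiv:2605.08573 — 2 statements merged into one kernel-verified Lean document; each statement's English description precedes it below -/
import Mathlib

section
/- Let φ : [0,2] → ℝ be C¹ with φ(0) = φ'(0) = 0, φ increasing on (0,1) and decreasing on (1,2). Set a₀ = sup_{0<t<1} φ'(t). Suppose there exist r₀ ∈ (1,2) and δ > 0 with r₀ + δ < 2 such that for all t ∈ (r₀, r₀+δ): -(1/2) δ^{-1} φ(r₀) < φ'(t) < -(3/2)√2 a₀ δ^{-1/2}. Then M(r₀+δ) := 2 ∫_0^{r₀+δ} φ'(s)(r₀+δ-s)^{-1/2} ds ≤ -2√2 a₀ < 0, and moreover φ(r₀+δ) ≥ (1/2) φ(r₀). -/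
open Real MeasureTheory Set

/-!
Split `∫₀^{r₀+δ} φ'(s) (r₀+δ-s)^{-1/2} ds` at `1` and `r₀`. On `(0,1)` we have `φ' ≤ a₀`, and the
weight integrates to `2(√(r₀+δ) - √(r₀+δ-1)) ≤ 2√2`; on `(1,r₀)` the integrand is nonpositive;
on `(r₀,r₀+δ)` the upper bound on `φ'` and `∫ (r₀+δ-s)^{-1/2} = 2√δ` contribute `-3√2 a₀`.
The lower bound on `φ'` over `(r₀,r₀+δ)` gives `φ(r₀+δ) ≥ φ(r₀)/2` by the mean value inequality.
-/

section Weight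

variable {a b c r : ℝ}

theorem intervalIntegrable_sub_rpow (hr : -1 < r) :
    IntervalIntegrable (fun s => (c - s) ^ r) volume a b := by
  simpa using
    (intervalIntegral.intervalIntegrable_rpow' (a := c - a) (b := c - b) hr).comp_sub_left c

theorem integral_sub_rpow (hr : -1 < r) :
    ∫ s in a..b, (c - s) ^ r = ((c - a) ^ (r + 1) - (c - b) ^ (r + 1)) / (r + 1) := by
  rw [intervalIntegral.integral_comp_sub_left (fun x => x ^ r) c, integral_rpow (Or.inl hr)]

theorem integral_sub_rpow_neg_half :
    ∫ s in a..b, (c - s) ^ (-(1:ℝ)/2) = 2 * (√(c - a) - √(c - b)) := by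
  rw [integral_sub_rpow (by norm_num), sqrt_eq_rpow, sqrt_eq_rpow]
  norm_num
  ring

end Weight

theorem intervalIntegral.integral_mul_le_mul_integral {f w : ℝ → ℝ} {a b C : ℝ} (hab : a ≤ b)
    (hfw : IntervalIntegrable (fun s => f s * w s) volume a b)
    (hw : IntervalIntegrable w volume a b)
    (hf : ∀ s ∈ Ioo a b, f s ≤ C) (hw0 : ∀ s ∈ Ioo a b, 0 ≤ w s) :
    ∫ s in a..b, f s * w s ≤ C * ∫ s in a..b, w s := by
  rw [← intervalIntegral.integral_const_mul]
  exact intervalIntegral.integral_mono_on_of_le_Ioo hab hfw (hw.const_mul C)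
    fun s hs => mul_le_mul_of_nonneg_right (hf s hs) (hw0 s hs)

theorem integral_mul_rsqrt_sub_le_of_le_on_Ioo_zero_one {f : ℝ → ℝ} {A T : ℝ} (hA : 0 ≤ A)
    (hT1 : 1 ≤ T) (hT2 : T ≤ 2)
    (hfw : IntervalIntegrable (fun s => f s * (T - s) ^ (-(1:ℝ)/2)) volume 0 1)
    (hf : ∀ s ∈ Ioo 0 1, f s ≤ A) :
    ∫ s in (0:ℝ)..1, f s * (T - s) ^ (-(1:ℝ)/2) ≤ 2 * √2 * A := by
  have hweight := intervalIntegral.integral_mul_le_mul_integral zero_le_one hfw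
    (intervalIntegrable_sub_rpow (by norm_num)) hf
    fun s hs => rpow_nonneg (by linarith [hs.2]) _
  rw [integral_sub_rpow_neg_half, sub_zero] at hweight
  have hsqrtT : √T ≤ √2 := sqrt_le_sqrt hT2
  nlinarith [sqrt_nonneg (T - 1)]

theorem integral_mul_rsqrt_sub_le_of_le_on_Ioo {f : ℝ → ℝ} {K r δ : ℝ} (hδ : 0 < δ)
    (hfw : IntervalIntegrable (fun s => f s * (r + δ - s) ^ (-(1:ℝ)/2)) volume r (r + δ))
    (hf : ∀ s ∈ Ioo r (r + δ), f s ≤ K * δ ^ (-(1:ℝ)/2)) :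
    ∫ s in r..r + δ, f s * (r + δ - s) ^ (-(1:ℝ)/2) ≤ 2 * K := by
  have hweight := intervalIntegral.integral_mul_le_mul_integral (by linarith) hfw
    (intervalIntegrable_sub_rpow (by norm_num)) hf
    fun s hs => rpow_nonneg (by linarith [hs.2]) _
  rw [integral_sub_rpow_neg_half, add_sub_cancel_left, sub_self, sqrt_zero, sub_zero] at hweight
  have hδ_sqrt : δ ^ (-(1:ℝ)/2) * √δ = 1 := by
    rw [sqrt_eq_rpow, ← rpow_add hδ]; norm_num
  linear_combination hweight + 2 * K * hδ_sqrt

section Deriv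

variable {φ : ℝ → ℝ} {a b : ℝ}

theorem AntitoneOn.deriv_nonpos_of_isOpen {s : Set ℝ} (hφ : AntitoneOn φ s) (hs : IsOpen s)
    {x : ℝ} (hx : x ∈ s) : deriv φ x ≤ 0 := by
  rw [← derivWithin_of_isOpen hs hx]
  exact hφ.derivWithin_nonpos

theorem ContDiffOn.deriv_le_sSup_deriv_image_Ioo (hφ : ContDiffOn ℝ 1 φ (Icc a b)) (hab : a < b)
    {x : ℝ} (hx : x ∈ Ioo a b) : deriv φ x ≤ sSup (deriv φ '' Ioo a b) := by
  refine le_csSup ((isCompact_Icc.image_of_continuousOn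
    (hφ.continuousOn_derivWithin (uniqueDiffOn_Icc hab) le_rfl)).bddAbove.mono ?_) ⟨x, hx, rfl⟩
  rintro _ ⟨s, hs, rfl⟩
  exact ⟨s, Ioo_subset_Icc_self hs, derivWithin_of_mem_nhds (Icc_mem_nhds hs.1 hs.2)⟩

theorem ContDiffOn.intervalIntegrable_deriv_mul (hφ : ContDiffOn ℝ 1 φ (Icc a b)) (hab : a < b)
    {c d : ℝ} (hc : c ∈ Icc a b) (hd : d ∈ Icc a b) {w : ℝ → ℝ}
    (hw : IntervalIntegrable w volume c d) :
    IntervalIntegrable (fun s => deriv φ s * w s) volume c d := by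
  have hg := (hφ.continuousOn_derivWithin (uniqueDiffOn_Icc hab) le_rfl).mono
    (uIcc_subset_Icc hc hd)
  refine (hw.continuousOn_mul hg).congr_uIoo fun s hs => ?_
  obtain ⟨has, hsb⟩ := uIoo_subset_Ioo hc hd hs
  simp only [derivWithin_of_mem_nhds (Icc_mem_nhds has hsb)]

theorem add_le_of_mul_inv_le_deriv_on_Ioo {m δ : ℝ} (hδ : 0 < δ)
    (hφ : ContinuousOn φ (Icc a (a + δ))) (hφ' : DifferentiableOn ℝ φ (Ioo a (a + δ)))
    (hm : ∀ x ∈ Ioo a (a + δ), m * δ⁻¹ ≤ deriv φ x) :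
    φ a + m ≤ φ (a + δ) := by
  have hmvt := (convex_Icc a (a + δ)).mul_sub_le_image_sub_of_le_deriv hφ
    (by rwa [interior_Icc]) (fun x hx => hm x (by rwa [interior_Icc] at hx))
    a (left_mem_Icc.2 (by linarith)) (a + δ) (right_mem_Icc.2 (by linarith)) (by linarith)
  rw [add_sub_cancel_left, inv_mul_cancel_right₀ hδ.ne'] at hmvt
  linarith

end Deriv

theorem stmt4_general (φ : ℝ → ℝ)
    (hC1 : ContDiffOn ℝ 1 φ (Icc (0:ℝ) 2))
    (hanti : AntitoneOn φ (Ioo (1:ℝ) 2))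
    (a₀ : ℝ) (ha₀ : a₀ = sSup (deriv φ '' Ioo (0:ℝ) 1)) (ha₀pos : 0 < a₀)
    (r₀ δ : ℝ) (hr₀ : r₀ ∈ Ioo (1:ℝ) 2) (hδ : 0 < δ) (hrδ : r₀ + δ < 2)
    (hband : ∀ t ∈ Ioo r₀ (r₀ + δ),
      -(1/2) * δ⁻¹ * φ r₀ < deriv φ t ∧
      deriv φ t < -(3/2) * Real.sqrt 2 * a₀ * δ ^ (-(1:ℝ)/2)) :
    2 * (∫ s in (0:ℝ)..(r₀ + δ), deriv φ s * (r₀ + δ - s) ^ (-(1:ℝ)/2))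
        ≤ -2 * Real.sqrt 2 * a₀ ∧
    -2 * Real.sqrt 2 * a₀ < 0 ∧
    φ (r₀ + δ) ≥ (1/2) * φ r₀ := by
  obtain ⟨hr1, hr2⟩ := hr₀
  have h0 : (0:ℝ) ∈ Icc 0 2 := by norm_num
  have h1 : (1:ℝ) ∈ Icc 0 2 := by norm_num
  have hr₀I : r₀ ∈ Icc (0:ℝ) 2 := ⟨by linarith, by linarith⟩
  have hTI : r₀ + δ ∈ Icc (0:ℝ) 2 := ⟨by linarith, hrδ.le⟩
  have hint : ∀ a ∈ Icc (0:ℝ) 2, ∀ b ∈ Icc (0:ℝ) 2, IntervalIntegrable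
      (fun s => deriv φ s * (r₀ + δ - s) ^ (-(1:ℝ)/2)) volume a b := fun a ha b hb =>
    hC1.intervalIntegrable_deriv_mul two_pos ha hb (intervalIntegrable_sub_rpow (by norm_num))
  have hA := integral_mul_rsqrt_sub_le_of_le_on_Ioo_zero_one ha₀pos.le (by linarith) hrδ.le
    (hint 0 h0 1 h1) fun s hs =>
      ha₀ ▸ (hC1.mono (Icc_subset_Icc_right one_le_two)).deriv_le_sSup_deriv_image_Ioo one_pos hs
  have hB := (intervalIntegral.integral_mul_le_mul_integral hr1.le (hint 1 h1 r₀ hr₀I)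
    (intervalIntegrable_sub_rpow (by norm_num))
    (fun s hs => hanti.deriv_nonpos_of_isOpen isOpen_Ioo ⟨hs.1, hs.2.trans hr2⟩)
    fun s hs => rpow_nonneg (by linarith [hs.2]) _).trans_eq (zero_mul _)
  have hC := integral_mul_rsqrt_sub_le_of_le_on_Ioo hδ (hint r₀ hr₀I _ hTI)
    fun s hs => (hband s hs).2.le
  have hsplit₀ := intervalIntegral.integral_add_adjacent_intervals (hint 0 h0 1 h1)
    (hint 1 h1 _ hTI)
  have hsplit₁ := intervalIntegral.integral_add_adjacent_intervals (hint 1 h1 r₀ hr₀I)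
    (hint r₀ hr₀I _ hTI)
  have hsub : Icc r₀ (r₀ + δ) ⊆ Icc 0 2 := Icc_subset_Icc hr₀I.1 hrδ.le
  have hφ_lower := add_le_of_mul_inv_le_deriv_on_Ioo hδ (hC1.continuousOn.mono hsub)
    ((hC1.differentiableOn one_ne_zero).mono (Ioo_subset_Icc_self.trans hsub))
    fun t ht => (mul_right_comm (-(1/2) : ℝ) δ⁻¹ (φ r₀)).ge.trans (hband t ht).1.le
  refine ⟨by linarith, by nlinarith [sqrt_pos.2 (two_pos : (0:ℝ) < 2)], by linarith⟩

/-- `M(r₀+δ) ≤ -2√2·a₀ < 0` and `φ(r₀+δ) ≥ φ(r₀)/2`. -/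
theorem stmt4 (φ : ℝ → ℝ)
    (hC1 : ContDiffOn ℝ 1 φ (Icc (0:ℝ) 2))
    (hφ0 : φ 0 = 0) (hφ'0 : deriv φ 0 = 0)
    (hmono : MonotoneOn φ (Ioo (0:ℝ) 1))
    (hanti : AntitoneOn φ (Ioo (1:ℝ) 2))
    (a₀ : ℝ) (ha₀ : a₀ = sSup (deriv φ '' Ioo (0:ℝ) 1)) (ha₀pos : 0 < a₀)
    (r₀ δ : ℝ) (hr₀ : r₀ ∈ Ioo (1:ℝ) 2) (hδ : 0 < δ) (hrδ : r₀ + δ < 2)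
    (hband : ∀ t ∈ Ioo r₀ (r₀ + δ),
      -(1/2) * δ⁻¹ * φ r₀ < deriv φ t ∧
      deriv φ t < -(3/2) * Real.sqrt 2 * a₀ * δ ^ (-(1:ℝ)/2)) :
    2 * (∫ s in (0:ℝ)..(r₀ + δ), deriv φ s * (r₀ + δ - s) ^ (-(1:ℝ)/2))
        ≤ -2 * Real.sqrt 2 * a₀ ∧
    -2 * Real.sqrt 2 * a₀ < 0 ∧
    φ (r₀ + δ) ≥ (1/2) * φ r₀ :=
  stmt4_general φ hC1 hanti a₀ ha₀ ha₀pos r₀ δ hr₀ hδ hrδ hband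
end

section
/- For n ≥ 3 and x' ∈ ℝ^{n-1} with x' ≠ 0, the identity (1/(2√π)) ∫_{-∞}^t (t-s)^{-3/2} Γ'(x', t-s) ds = |x'|^{-n} π^{-n/2} ∫_0^∞ s^{n/2 - 1} e^{-s} ds holds, where Γ'(x', τ) = (4πτ)^{-(n-1)/2} exp(-|x'|²/(4τ)) is the (n-1)-dimensional Gaussian kernel. In particular the left-hand side equals π^{-n/2} Γ(n/2) |x'|^{-n}, where Γ denotes the Gamma function. -/
open Real MeasureTheory Set

/-!
After translating `s ↦ t - s`, the integrand is a constant times `τ ^ (-n/2 - 1) * exp (-a / τ)`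
with `a = ‖x'‖² / 4`, and the substitution `u = a / τ` turns its integral into `a ^ (-n/2) Γ(n/2)`.
The powers of `2` and `π` in front then collapse to `π ^ (-n/2) * ‖x'‖ ^ (-n)`.
-/

lemma setIntegral_Iio_comp_sub_left {E : Type*} [NormedAddCommGroup E] [NormedSpace ℝ E]
    (f : ℝ → E) (t : ℝ) : ∫ s in Iio t, f (t - s) = ∫ τ in Ioi 0, f τ := by
  have hemb : MeasurableEmbedding (t - ·) :=
    (Homeomorph.subLeft t).isClosedEmbedding.measurableEmbedding
  rw [← (Measure.measurePreserving_sub_left volume t).setIntegral_preimage_emb hemb f (Ioi 0)]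
  congr with s
  simp

lemma integral_rpow_neg_sub_one_mul_exp_neg_div_Ioi {a p : ℝ} (ha : 0 < a) (hp : 0 < p) :
    ∫ τ in Ioi 0, τ ^ (-p - 1) * exp (-(a / τ)) = a ^ (-p) * Gamma p := by
  set g : ℝ → ℝ := fun y ↦ y ^ (p - 1) * exp (-(a * y))
  calc ∫ τ in Ioi 0, τ ^ (-p - 1) * exp (-(a / τ))
      = ∫ τ in Ioi 0, (|(-1 : ℝ)| * τ ^ ((-1 : ℝ) - 1)) • g (τ ^ (-1 : ℝ)) := by
        refine setIntegral_congr_fun measurableSet_Ioi fun τ (hτ : 0 < τ) ↦ ?_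
        simp only [g, smul_eq_mul, abs_neg, abs_one, one_mul, rpow_neg_one, inv_rpow hτ.le,
          ← rpow_neg hτ.le, ← mul_assoc, ← rpow_add hτ, div_eq_mul_inv]
        ring_nf
    _ = ∫ y in Ioi 0, g y := integral_comp_rpow_Ioi g (by norm_num)
    _ = a ^ (-p) * Gamma p := by
        rw [integral_rpow_mul_exp_neg_mul_Ioi hp ha, one_div, inv_rpow ha.le, rpow_neg ha.le]

lemma one_div_two_sqrt_pi_mul_rpow_mul_rpow {d r : ℝ} (hr : 0 < r) :
    1 / (2 * √π) * (4 * π) ^ (-(d - 1) / 2) * (r ^ 2 / 4) ^ (-(d / 2))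
      = π ^ (-d / 2) * r ^ (-d) := by
  have h2 : (0 : ℝ) < 2 := two_pos
  have hfour : (4 : ℝ) ^ (-(d - 1) / 2) = 2 ^ (1 - d) := by
    rw [show (4 : ℝ) = 2 ^ (2 : ℝ) by norm_num, ← rpow_mul h2.le]; ring_nf
  have hpi : π ^ (-(d - 1) / 2) = √π * π ^ (-d / 2) := by
    rw [sqrt_eq_rpow, ← rpow_add pi_pos]; ring_nf
  have hr2 : (r ^ 2 / 4) ^ (-(d / 2)) = 2 ^ d * r ^ (-d) := by
    rw [show r ^ 2 / 4 = (r / 2) ^ (2 : ℝ) by norm_num [div_pow], ← rpow_mul (by positivity),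
      show 2 * -(d / 2) = -d by ring, div_rpow hr.le h2.le, rpow_neg h2.le]
    field_simp
  rw [mul_rpow (by norm_num) pi_pos.le, hfour, hpi, hr2]
  field_simp
  rw [← rpow_add h2]
  norm_num

lemma integral_rpow_mul_heatKernel_Ioi {d r : ℝ} (hd : 0 < d) (hr : 0 < r) :
    1 / (2 * √π) * ∫ τ in Ioi 0,
        τ ^ (-(3 : ℝ) / 2) * ((4 * π * τ) ^ (-(d - 1) / 2) * exp (-r ^ 2 / (4 * τ)))
      = π ^ (-d / 2) * Gamma (d / 2) * r ^ (-d) := by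
  have hkernel : ∀ τ ∈ Ioi (0 : ℝ),
      τ ^ (-(3 : ℝ) / 2) * ((4 * π * τ) ^ (-(d - 1) / 2) * exp (-r ^ 2 / (4 * τ)))
        = (4 * π) ^ (-(d - 1) / 2) * (τ ^ (-(d / 2) - 1) * exp (-(r ^ 2 / 4 / τ))) := by
    intro τ (hτ : 0 < τ)
    rw [mul_rpow (by positivity) hτ.le, show -(d / 2) - 1 = -(3 : ℝ) / 2 + -(d - 1) / 2 by ring,
      rpow_add hτ, show -r ^ 2 / (4 * τ) = -(r ^ 2 / 4 / τ) by ring]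
    ring
  rw [setIntegral_congr_fun measurableSet_Ioi hkernel, integral_const_mul,
    integral_rpow_neg_sub_one_mul_exp_neg_div_Ioi (by positivity) (by positivity), ← mul_assoc,
    ← mul_assoc, one_div_two_sqrt_pi_mul_rpow_mul_rpow hr]
  ring

/-- explicit computation of the singular time integral of the
`(n-1)`-dimensional Gaussian kernel. -/
theorem stmt6 (n : ℕ) (hn : 3 ≤ n)
    (x' : EuclideanSpace ℝ (Fin (n - 1))) (hx : x' ≠ 0) (t : ℝ)
    (G : ℝ → ℝ)
    (hG : ∀ τ : ℝ, G τ =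
      if 0 < τ then (4 * π * τ) ^ (-((n:ℝ) - 1)/2) * Real.exp (-‖x'‖^2 / (4 * τ)) else 0) :
    (1 / (2 * Real.sqrt π)) * (∫ s in Iio t, (t - s) ^ (-(3:ℝ)/2) * G (t - s))
      = ‖x'‖ ^ (-(n:ℝ)) * π ^ (-(n:ℝ)/2) * ∫ s in Ioi (0:ℝ), s ^ ((n:ℝ)/2 - 1) * Real.exp (-s) ∧
    (1 / (2 * Real.sqrt π)) * (∫ s in Iio t, (t - s) ^ (-(3:ℝ)/2) * G (t - s))
      = π ^ (-(n:ℝ)/2) * Real.Gamma ((n:ℝ)/2) * ‖x'‖ ^ (-(n:ℝ)) := by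
  have hn_pos : (0 : ℝ) < n := Nat.cast_pos.mpr (by omega)
  have hLHS : (1 / (2 * Real.sqrt π)) * (∫ s in Iio t, (t - s) ^ (-(3:ℝ)/2) * G (t - s))
      = π ^ (-(n:ℝ)/2) * Real.Gamma ((n:ℝ)/2) * ‖x'‖ ^ (-(n:ℝ)) := by
    rw [setIntegral_Iio_comp_sub_left (fun τ ↦ τ ^ (-(3:ℝ)/2) * G τ),
      setIntegral_congr_fun measurableSet_Ioi fun τ (hτ : 0 < τ) ↦ by rw [hG, if_pos hτ]]
    exact integral_rpow_mul_heatKernel_Ioi hn_pos (norm_pos_iff.mpr hx)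
  refine ⟨?_, hLHS⟩
  rw [hLHS, Gamma_eq_integral (by positivity)]
  simp_rw [mul_comm (exp _)]
  ring
end
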